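/- Suppose ψ(y) = C_α·|y|^{−α} for all y ∈ ℤ^d \ {0}, where α > 0 and C_α > 0 is the constant making Σ_{y≠0} J_y = 1. Let x ∈ ℤ^d \ {0} and let t be dual to x, suppose Ξ := Σ_{y≠0} ψ(y)·e^{−𝔰_t(y)} < ∞, and set λ̃ = min(Ξ^{−1}, 1). Then for every λ ∈ (0, λ̃) there exists c₊ = c₊(λ) < ∞ such that G^KRW_λ(0, n·x) ≤ c₊·J_{n·x} for all n ≥ 1. -/

import Mathlib

open Filter Topology
open ENNReal

noncomputable section

/-- The canonical embedding of `ℤ^d` into `ℝ^d`. -/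
def ic {d : ℕ} (y : Fin d → ℤ) : Fin d → ℝ := fun i => (y i : ℝ)

/-- `nrm` is a norm on `ℝ^d` invariant under the symmetries of `ℤ^d`
(coordinate permutations and sign flips). -/
structure IsLatticeNorm (d : ℕ) (nrm : (Fin d → ℝ) → ℝ) : Prop where
  eq_zero : ∀ x : Fin d → ℝ, nrm x = 0 ↔ x = 0
  smul : ∀ (a : ℝ) (x : Fin d → ℝ), nrm (a • x) = |a| * nrm x
  add_le : ∀ x y : Fin d → ℝ, nrm (x + y) ≤ nrm x + nrm y
  symm : ∀ (π : Equiv.Perm (Fin d)) (ε : Fin d → ℝ), (∀ i, ε i = 1 ∨ ε i = -1) →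
      ∀ x : Fin d → ℝ, nrm (fun i => ε i * x (π i)) = nrm x

/-- `ψ` is a positive, lattice-symmetric, sub-exponential prefactor on `ℤ^d \ {0}`. -/
structure IsPrefactor (d : ℕ) (nrm : (Fin d → ℝ) → ℝ) (ψ : (Fin d → ℤ) → ℝ) : Prop where
  pos : ∀ y : Fin d → ℤ, y ≠ 0 → 0 < ψ y
  symm : ∀ (π : Equiv.Perm (Fin d)) (ε : Fin d → ℤ), (∀ i, ε i = 1 ∨ ε i = -1) →
      ∀ y : Fin d → ℤ, ψ (fun i => ε i * y (π i)) = ψ y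
  subexp : Filter.Tendsto (fun y : Fin d → ℤ => Real.log (ψ y) / nrm (ic y))
      Filter.cofinite (nhds 0)

/-- The coupling constants `J_y = ψ(y) e^{-|y|}` for `y ≠ 0`, and `J_0 = 0`. -/
def Jw {d : ℕ} (nrm : (Fin d → ℝ) → ℝ) (ψ : (Fin d → ℤ) → ℝ) (y : Fin d → ℤ) : ℝ :=
  if y = 0 then 0 else ψ y * Real.exp (-(nrm (ic y)))

/-- The killed random walk two-point function
`G^KRW_λ(x,y) = Σ_{k≥0} Σ_{y_1,…,y_k ≠ 0 : y_1+⋯+y_k = y-x} Π_i λ J_{y_i}`,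
with values in `[0,∞]`; walks are encoded by their lists of nonzero steps. -/
def KRW {d : ℕ} (lam : ℝ) (J : (Fin d → ℤ) → ℝ) (x y : Fin d → ℤ) : ENNReal :=
  ∑' l : {l : List (Fin d → ℤ) // (∀ s ∈ l, s ≠ 0) ∧ l.sum = y - x},
    (l.1.map (fun s => ENNReal.ofReal (lam * J s))).prod

/-- `icl lam J x ν` expresses that the inverse correlation length
`-lim_n (1/n) log G^KRW_λ(0, n•x)` exists and equals `ν`. -/
def icl {d : ℕ} (lam : ℝ) (J : (Fin d → ℤ) → ℝ) (x : Fin d → ℤ) (ν : ℝ) : Prop :=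
  Filter.Tendsto (fun n : ℕ => -(Real.log ((KRW lam J 0 ((n : ℤ) • x)).toReal) / (n : ℝ)))
    Filter.atTop (nhds ν)

/-- Euclidean scalar product on `ℝ^d`. -/
def dotR {d : ℕ} (t y : Fin d → ℝ) : ℝ := ∑ i, t i * y i

/-- `t` is dual to `x`: `t·x = |x|` and `t·y ≤ |y|` for all `y`. -/
def IsDual {d : ℕ} (nrm : (Fin d → ℝ) → ℝ) (t x : Fin d → ℝ) : Prop :=
  dotR t x = nrm x ∧ ∀ y : Fin d → ℝ, dotR t y ≤ nrm y

/-- The surcharge function `𝔰_t(y) = |y| - t·y` of a dual vector `t`. -/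
def scharge {d : ℕ} (nrm : (Fin d → ℝ) → ℝ) (t : Fin d → ℝ) (y : Fin d → ℤ) : ℝ :=
  nrm (ic y) - dotR t (ic y)

end

section AuxHelpers
variable {d : ℕ}

variable {d : ℕ}

lemma ic_add (a b : Fin d → ℤ) : ic (a + b) = ic a + ic b := by
  funext i; simp [ic]

lemma ic_zero : ic (0 : Fin d → ℤ) = 0 := by funext i; simp [ic]

lemma ic_smul (n : ℤ) (x : Fin d → ℤ) : ic (n • x) = (n : ℝ) • ic x := by
  funext i; simp [ic]

lemma nrm_nonneg {nrm : (Fin d → ℝ) → ℝ} (h : IsLatticeNorm d nrm) (x : Fin d → ℝ) :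
    0 ≤ nrm x := by
  have h0 : nrm 0 = 0 := (h.eq_zero 0).mpr rfl
  have := h.add_le x (-x)
  have hneg : nrm (-x) = nrm x := by
    have := h.smul (-1) x; simpa using this
  rw [add_neg_cancel, h0, hneg] at this
  linarith

lemma nrm_pos {nrm : (Fin d → ℝ) → ℝ} (h : IsLatticeNorm d nrm) {x : Fin d → ℝ}
    (hx : x ≠ 0) : 0 < nrm x := by
  rcases lt_or_eq_of_le (nrm_nonneg h x) with h' | h'
  · exact h'
  · exact absurd ((h.eq_zero x).mp h'.symm) hx

lemma ic_eq_zero_iff (y : Fin d → ℤ) : ic y = 0 ↔ y = 0 := by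
  constructor
  · intro h; funext i
    have := congrFun h i; simpa [ic] using this
  · rintro rfl; exact ic_zero

lemma dotR_add (t a b : Fin d → ℝ) : dotR t (a + b) = dotR t a + dotR t b := by
  simp [dotR, mul_add, Finset.sum_add_distrib]

lemma dotR_zero (t : Fin d → ℝ) : dotR t 0 = 0 := by simp [dotR]

lemma dotR_smul (t : Fin d → ℝ) (c : ℝ) (a : Fin d → ℝ) : dotR t (c • a) = c * dotR t a := by
  simp only [dotR, Finset.mul_sum, Pi.smul_apply, smul_eq_mul]
  exact Finset.sum_congr rfl fun i _ => by ring

lemma dotR_list_sum (t : Fin d → ℝ) (l : List (Fin d → ℤ)) :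
    dotR t (ic l.sum) = (l.map (fun s => dotR t (ic s))).sum := by
  induction l with
  | nil => simp [ic_zero, dotR_zero]
  | cons a l ih => simp [List.sum_cons, ic_add, dotR_add, ih]

lemma nrm_list_sum_le {nrm : (Fin d → ℝ) → ℝ} (h : IsLatticeNorm d nrm)
    (l : List (Fin d → ℤ)) :
    nrm (ic l.sum) ≤ (l.map (fun s => nrm (ic s))).sum := by
  induction l with
  | nil => simp [ic_zero, (h.eq_zero 0).mpr rfl]
  | cons a l ih =>
      simp only [List.sum_cons, List.map_cons, ic_add]
      exact le_trans (h.add_le _ _) (by linarith)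

lemma perm_get_eraseIdx {α : Type*} [DecidableEq α] (l : List α) (j : ℕ) (hj : j < l.length) :
    l.Perm (l.get ⟨j, hj⟩ :: l.eraseIdx j) := by
  have h1 : l.Perm (l.get ⟨j, hj⟩ :: l.erase (l.get ⟨j, hj⟩)) :=
    List.perm_cons_erase (l.get_mem _)
  exact h1.trans (List.Perm.cons _ (List.erase_getElem hj))

lemma eq_of_eraseIdx {α : Type*} : ∀ (j : ℕ) (l1 l2 : List α) (h1 : j < l1.length)
    (h2 : j < l2.length), l1.eraseIdx j = l2.eraseIdx j →
    l1.get ⟨j, h1⟩ = l2.get ⟨j, h2⟩ → l1 = l2 := by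
  intro j
  induction j with
  | zero =>
      rintro (_ | ⟨a, t1⟩) (_ | ⟨b, t2⟩) h1 h2 he hg
      · rfl
      · simp at h1
      · simp at h2
      · simp_all
  | succ j ih =>
      rintro (_ | ⟨a, t1⟩) (_ | ⟨b, t2⟩) h1 h2 he hg
      · rfl
      · simp at h1
      · simp at h2
      · simp only [List.eraseIdx_cons_succ, List.cons.injEq] at he
        simp only [List.get_cons_succ] at hg
        exact List.cons_eq_cons.mpr ⟨he.1, ih t1 t2 (by simpa using h1) (by simpa using h2) he.2 hg⟩




lemma prod_map_exp {α : Type*} (g : α → ℝ) (l : List α) :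
    (l.map fun s => ENNReal.ofReal (Real.exp (g s))).prod =
      ENNReal.ofReal (Real.exp ((l.map g).sum)) := by
  induction l with
  | nil => simp
  | cons a l ih =>
      simp only [List.map_cons, List.prod_cons, List.sum_cons, ih, Real.exp_add,
        ENNReal.ofReal_mul (Real.exp_nonneg _)]

lemma tsum_pi_pow {V : Type*} (F : V → ℝ≥0∞) : ∀ m : ℕ,
    (∑' v : Fin m → V, ∏ i, F (v i)) = (∑' y, F y) ^ m
  | 0 => by
      rw [tsum_eq_single (fun i => (i.elim0 : V)) (fun b hb => absurd (Subsingleton.elim b _) hb)]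
      simp
  | (m + 1) => by
      rw [← Equiv.tsum_eq (Fin.consEquiv (fun _ => V)) (fun v => ∏ i, F (v i))]
      have key : ∀ p : V × (Fin m → V),
          (∏ i, F ((Fin.consEquiv (fun _ => V)) p i)) = F p.1 * ∏ i, F (p.2 i) := by
        rintro ⟨a, v⟩
        simp [Fin.prod_univ_succ]
      simp only [key]
      rw [ENNReal.tsum_prod']
      simp only [ENNReal.tsum_mul_left]
      rw [ENNReal.tsum_mul_right, tsum_pi_pow F m, pow_succ]
      ring

lemma tsum_nat_indicator (m : ℕ) (c : ℝ≥0∞) :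
    ∑' j : ℕ, (if j ≤ m then c else 0) = (m + 1) * c := by
  rw [tsum_eq_sum (s := Finset.range (m + 1))
    (fun b hb => by rw [if_neg]; simpa [Nat.lt_succ_iff] using hb)]
  rw [Finset.sum_congr rfl (fun j hj => if_pos (by simpa [Nat.lt_succ_iff] using hj))]
  simp [Finset.sum_const, mul_comm]

lemma summable_aux (K : ℕ) {q : ℝ} (hq0 : 0 < q) (hq1 : q < 1) :
    Summable (fun m : ℕ => ((m : ℝ) + 1) ^ K * q ^ m) := by
  have h : Summable (fun n : ℕ => (n : ℝ) ^ K * q ^ n) :=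
    summable_pow_mul_geometric_of_norm_lt_one K
      (by rw [Real.norm_eq_abs, abs_of_nonneg hq0.le]; exact hq1)
  have h2 := (summable_nat_add_iff 1).mpr h
  have h3 : (fun n : ℕ => ((n + 1 : ℕ) : ℝ) ^ K * q ^ (n + 1)) =
      fun n : ℕ => q * (((n : ℝ) + 1) ^ K * q ^ n) := by
    funext n; push_cast; ring
  rw [h3] at h2
  refine (h2.mul_left q⁻¹).congr fun n => ?_
  field_simp


lemma list_sum_neg {α : Type*} (f : α → ℝ) (l : List α) :
    (l.map fun s => -(f s)).sum = -((l.map f).sum) := by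
  induction l with
  | nil => simp
  | cons a l ih => simp [ih]; ring

lemma walk_bound {d : ℕ} {nrm : (Fin d → ℝ) → ℝ} (hnrm : IsLatticeNorm d nrm)
    {ψ : (Fin d → ℤ) → ℝ} (hψpos : ∀ y : Fin d → ℤ, y ≠ 0 → 0 < ψ y)
    {αp Cα : ℝ} (hαp : 0 < αp) (hCα : 0 < Cα)
    (hψdef : ∀ y : Fin d → ℤ, y ≠ 0 → ψ y = Cα * Real.rpow (nrm (ic y)) (-αp))
    {lam : ℝ} (hlam0 : 0 < lam)
    {t : Fin d → ℝ} (hdual : ∀ y : Fin d → ℝ, dotR t y ≤ nrm y)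
    {z : Fin d → ℤ} (hzne : z ≠ 0) (hdz : dotR t (ic z) = nrm (ic z))
    {Nc : ℕ} (hNc : αp ≤ (Nc : ℝ))
    (F : (Fin d → ℤ) → ℝ≥0∞)
    (hF : ∀ s, F s = if s = 0 then 0 else
      ENNReal.ofReal (lam * (ψ s * Real.exp (-(scharge nrm t s)))))
    (l : List (Fin d → ℤ)) (hl0 : ∀ s ∈ l, s ≠ 0) (hls : l.sum = z)
    (j : ℕ) (hj : j < l.length)
    (hmax : ∀ i (hi : i < l.length), nrm (ic (l.get ⟨i, hi⟩)) ≤ nrm (ic (l.get ⟨j, hj⟩))) :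
    (l.map (fun s => ENNReal.ofReal (lam * Jw nrm ψ s))).prod ≤
      ENNReal.ofReal (lam * (ψ z * Real.exp (-(nrm (ic z))))) *
        ((((l.eraseIdx j).length + 1 : ℕ) : ℝ≥0∞) ^ Nc * ((l.eraseIdx j).map F).prod) := by
  have hk1 : (l.eraseIdx j).length + 1 = l.length := List.length_eraseIdx_add_one hj
  set k : ℕ := l.length with hkdef
  set lj : Fin d → ℤ := l.get ⟨j, hj⟩ with hlj
  have hljne : lj ≠ 0 := hl0 _ (l.get_mem _)
  -- step 1 : split each factor
  have hsplit : l.map (fun s => ENNReal.ofReal (lam * Jw nrm ψ s)) =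
      l.map (fun s => ENNReal.ofReal (Real.exp (-(dotR t (ic s)))) * F s) := by
    apply List.map_congr_left
    intro s hs
    have hs0 := hl0 s hs
    rw [hF, if_neg hs0, Jw, if_neg hs0, scharge,
      ← ENNReal.ofReal_mul (Real.exp_nonneg _)]
    congr 1
    have hee : Real.exp (-(dotR t (ic s))) * Real.exp (-(nrm (ic s) - dotR t (ic s))) =
        Real.exp (-(nrm (ic s))) := by
      rw [← Real.exp_add]; ring_nf
    rw [← hee]; ring
  rw [hsplit, List.prod_map_mul]
  -- step 2 : exponential part
  have hexp : (l.map fun s => ENNReal.ofReal (Real.exp (-(dotR t (ic s))))).prod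
      = ENNReal.ofReal (Real.exp (-(nrm (ic z)))) := by
    rw [prod_map_exp (fun s => -(dotR t (ic s))) l]
    congr 2
    rw [list_sum_neg, ← dotR_list_sum, hls, hdz]
  -- step 3 : peel off the max factor
  have hFsplit : (l.map F).prod = F lj * ((l.eraseIdx j).map F).prod := by
    have hp := ((perm_get_eraseIdx l j hj).map F).prod_eq
    rw [hlj]; simpa using hp
  -- step 4 : bound the max factor
  have hk1le : 1 ≤ k := by omega
  have hkR : (1 : ℝ) ≤ (k : ℝ) := by exact_mod_cast hk1le
  have hkpos : (0 : ℝ) < (k : ℝ) := by linarith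
  have hMz : 0 < nrm (ic z) := nrm_pos hnrm (fun h => hzne ((ic_eq_zero_iff z).mp h))
  have ha : 0 < nrm (ic lj) := nrm_pos hnrm (fun h => hljne ((ic_eq_zero_iff lj).mp h))
  have hsum_le : nrm (ic z) ≤ (k : ℝ) * nrm (ic lj) := by
    have h1 : nrm (ic l.sum) ≤ (l.map (fun s => nrm (ic s))).sum := nrm_list_sum_le hnrm l
    have h2 : (l.map (fun s => nrm (ic s))).sum ≤ (l.map (fun s => nrm (ic s))).length • nrm (ic lj) := by
      apply List.sum_le_card_nsmul
      intro b hb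
      obtain ⟨s, hs, rfl⟩ := List.mem_map.mp hb
      obtain ⟨i, rfl⟩ := List.mem_iff_get.mp hs
      exact hmax i.1 i.2
    rw [hls] at h1
    rw [List.length_map, nsmul_eq_mul] at h2
    exact h1.trans h2
  have hψdef' : ∀ y : Fin d → ℤ, y ≠ 0 → ψ y = Cα * (nrm (ic y)) ^ (-αp) := hψdef
  have hψle : ψ lj ≤ (k : ℝ) ^ Nc * ψ z := by
    have hdiv0 : 0 < nrm (ic z) / (k : ℝ) := div_pos hMz hkpos
    have hdivle : nrm (ic z) / (k : ℝ) ≤ nrm (ic lj) := (div_le_iff₀ hkpos).mpr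
      (by rw [mul_comm]; exact hsum_le)
    have hr1 : (nrm (ic lj)) ^ (-αp) ≤ (nrm (ic z) / (k : ℝ)) ^ (-αp) :=
      Real.rpow_le_rpow_of_nonpos hdiv0 hdivle (by linarith)
    have hr2 : (nrm (ic z) / (k : ℝ)) ^ (-αp) =
        (nrm (ic z)) ^ (-αp) * (k : ℝ) ^ αp := by
      rw [div_eq_mul_inv, Real.mul_rpow hMz.le (inv_nonneg.mpr hkpos.le),
        Real.inv_rpow hkpos.le, Real.rpow_neg hkpos.le, inv_inv]
    have hr3 : (k : ℝ) ^ αp ≤ (k : ℝ) ^ Nc := by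
      rw [← Real.rpow_natCast (k : ℝ) Nc]
      exact Real.rpow_le_rpow_of_exponent_le hkR hNc
    have hψz : ψ z = Cα * (nrm (ic z)) ^ (-αp) := hψdef' z hzne
    have hψzpos : 0 < ψ z := hψpos z hzne
    rw [hψdef' lj hljne, hψz]
    calc Cα * (nrm (ic lj)) ^ (-αp)
        ≤ Cα * ((nrm (ic z)) ^ (-αp) * (k : ℝ) ^ αp) := by
          rw [← hr2]; exact mul_le_mul_of_nonneg_left hr1 hCα.le
      _ ≤ (k : ℝ) ^ Nc * (Cα * (nrm (ic z)) ^ (-αp)) := by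
          have h0 : 0 ≤ Cα * (nrm (ic z)) ^ (-αp) := by positivity
          calc Cα * ((nrm (ic z)) ^ (-αp) * (k : ℝ) ^ αp)
              = (k : ℝ) ^ αp * (Cα * (nrm (ic z)) ^ (-αp)) := by ring
            _ ≤ (k : ℝ) ^ Nc * (Cα * (nrm (ic z)) ^ (-αp)) :=
                mul_le_mul_of_nonneg_right hr3 h0
  have hFlj : F lj ≤ ((k : ℕ) : ℝ≥0∞) ^ Nc * ENNReal.ofReal (lam * ψ z) := by
    rw [hF, if_neg hljne]
    have hs0 : 0 ≤ scharge nrm t lj := sub_nonneg.mpr (hdual (ic lj))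
    have hexp1 : Real.exp (-(scharge nrm t lj)) ≤ 1 :=
      Real.exp_le_one_iff.mpr (by linarith)
    have hreal : lam * (ψ lj * Real.exp (-(scharge nrm t lj))) ≤
        (k : ℝ) ^ Nc * (lam * ψ z) := by
      have h1 : ψ lj * Real.exp (-(scharge nrm t lj)) ≤ ψ lj :=
        mul_le_of_le_one_right (hψpos _ hljne).le hexp1
      have h2 : ψ lj ≤ (k : ℝ) ^ Nc * ψ z := hψle
      nlinarith [hψpos z hzne, hlam0, pow_pos hkpos Nc]
    calc ENNReal.ofReal (lam * (ψ lj * Real.exp (-(scharge nrm t lj))))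
        ≤ ENNReal.ofReal ((k : ℝ) ^ Nc * (lam * ψ z)) := ENNReal.ofReal_le_ofReal hreal
      _ = ((k : ℕ) : ℝ≥0∞) ^ Nc * ENNReal.ofReal (lam * ψ z) := by
          rw [ENNReal.ofReal_mul (by positivity), ENNReal.ofReal_pow (Nat.cast_nonneg k),
            ENNReal.ofReal_natCast]
  -- final combination
  rw [hexp, hFsplit, hk1]
  calc ENNReal.ofReal (Real.exp (-(nrm (ic z)))) * (F lj * ((l.eraseIdx j).map F).prod)
      ≤ ENNReal.ofReal (Real.exp (-(nrm (ic z)))) *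
          ((((k : ℕ) : ℝ≥0∞) ^ Nc * ENNReal.ofReal (lam * ψ z)) * ((l.eraseIdx j).map F).prod) := by
        gcongr
    _ = ENNReal.ofReal (lam * (ψ z * Real.exp (-(nrm (ic z))))) *
          (((k : ℕ) : ℝ≥0∞) ^ Nc * ((l.eraseIdx j).map F).prod) := by
        rw [show lam * (ψ z * Real.exp (-(nrm (ic z)))) =
            Real.exp (-(nrm (ic z))) * (lam * ψ z) from by ring,
          ENNReal.ofReal_mul (Real.exp_nonneg _)]
        ring

lemma tsum_G {V : Type*} (F : V → ℝ≥0∞) (Nc : ℕ) :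
    (∑' p : List V × ℕ, if p.2 ≤ p.1.length then
        ((p.1.length + 1 : ℕ) : ℝ≥0∞) ^ Nc * (p.1.map F).prod else 0)
      = ∑' m : ℕ, ((m + 1 : ℕ) : ℝ≥0∞) ^ (Nc + 1) * (∑' y, F y) ^ m := by
  rw [ENNReal.tsum_prod']
  have h1 : ∀ l : List V, (∑' j : ℕ, if j ≤ l.length then
      ((l.length + 1 : ℕ) : ℝ≥0∞) ^ Nc * (l.map F).prod else 0)
      = ((l.length + 1 : ℕ) : ℝ≥0∞) ^ (Nc + 1) * (l.map F).prod := by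
    intro l
    rw [tsum_nat_indicator l.length (((l.length + 1 : ℕ) : ℝ≥0∞) ^ Nc * (l.map F).prod)]
    rw [pow_succ]
    push_cast
    ring
  rw [tsum_congr h1]
  rw [← Equiv.tsum_eq (List.equivSigmaTuple (α := V)).symm
    (fun l => ((l.length + 1 : ℕ) : ℝ≥0∞) ^ (Nc + 1) * (l.map F).prod)]
  rw [ENNReal.tsum_sigma']
  apply tsum_congr
  intro m
  have h2 : ∀ v : Fin m → V, (List.equivSigmaTuple (α := V)).symm ⟨m, v⟩ = List.ofFn v := fun v => rfl
  simp only [h2, List.length_ofFn, List.map_ofFn]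
  rw [ENNReal.tsum_mul_left]
  congr 1
  rw [← tsum_pi_pow F m]
  apply tsum_congr
  intro v
  rw [List.prod_ofFn]
  rfl


lemma exists_max_idx {d : ℕ} (nrm : (Fin d → ℝ) → ℝ) (l : List (Fin d → ℤ)) (hl : 0 < l.length) :
    ∃ j : ℕ, ∃ hj : j < l.length, ∀ i (hi : i < l.length),
      nrm (ic (l.get ⟨i, hi⟩)) ≤ nrm (ic (l.get ⟨j, hj⟩)) := by
  haveI : Nonempty (Fin l.length) := ⟨⟨0, hl⟩⟩
  obtain ⟨i0, hi0⟩ := Finite.exists_max (fun i : Fin l.length => nrm (ic (l.get i)))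
  exact ⟨i0.1, i0.2, fun i hi => hi0 ⟨i, hi⟩⟩

end AuxHelpers

/-- For the polynomial prefactor `ψ(y) = C_α |y|^{-α}`, if
`Ξ = Σ_{y≠0} ψ(y) e^{-𝔰_t(y)} < ∞` for `t` dual to `x`, then for every
`λ ∈ (0, min(Ξ⁻¹,1))` there is `c₊ < ∞` with
`G^KRW_λ(0, n•x) ≤ c₊ J_{n•x}` for all `n ≥ 1` (condensation upper bound). -/
theorem statement9 {d : ℕ} (hd : 1 ≤ d)
    (nrm : (Fin d → ℝ) → ℝ) (hnrm : IsLatticeNorm d nrm)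
    (ψ : (Fin d → ℤ) → ℝ) (hψpos : ∀ y : Fin d → ℤ, y ≠ 0 → 0 < ψ y)
    (αp Cα : ℝ) (hαp : 0 < αp) (hCα : 0 < Cα)
    (hψdef : ∀ y : Fin d → ℤ, y ≠ 0 → ψ y = Cα * Real.rpow (nrm (ic y)) (-αp))
    (hJ1 : HasSum (fun y : Fin d → ℤ => Jw nrm ψ y) 1)
    (x : Fin d → ℤ) (hx : x ≠ 0)
    (t : Fin d → ℝ) (ht : IsDual nrm t (ic x))
    (Xi : ℝ)
    (hXi : HasSum (fun y : {y : Fin d → ℤ // y ≠ 0} =>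
      ψ y.1 * Real.exp (-(scharge nrm t y.1))) Xi)
    (lam : ℝ) (hlam0 : 0 < lam) (hlam1 : lam < min Xi⁻¹ 1) :
    ∃ cp : ℝ, ∀ n : ℕ, 1 ≤ n →
      KRW lam (Jw nrm ψ) 0 ((n : ℤ) • x) ≤
        ENNReal.ofReal (cp * Jw nrm ψ ((n : ℤ) • x)) := by
  classical
  have hdual := ht.2
  have hlamXi : lam < Xi⁻¹ := lt_of_lt_of_le hlam1 (min_le_left _ _)
  obtain ⟨i0⟩ : Nonempty (Fin d) := ⟨⟨0, hd⟩⟩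
  have hy0ne : (fun _ => (1 : ℤ) : Fin d → ℤ) ≠ 0 := by
    intro h
    exact one_ne_zero (congrFun h i0)
  have hXipos : 0 < Xi := by
    have hle := le_hasSum hXi ⟨_, hy0ne⟩
      (fun j _ => (mul_pos (hψpos _ j.2) (Real.exp_pos _)).le)
    exact lt_of_lt_of_le (mul_pos (hψpos _ hy0ne) (Real.exp_pos _)) hle
  set q : ℝ := lam * Xi with hqdef
  have hq0 : 0 < q := mul_pos hlam0 hXipos
  have hq1 : q < 1 := by
    have h := mul_lt_mul_of_pos_right hlamXi hXipos
    rwa [inv_mul_cancel₀ hXipos.ne'] at h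
  set Nc : ℕ := ⌈αp⌉₊ with hNcdef
  have hNcge : αp ≤ (Nc : ℝ) := Nat.le_ceil αp
  have hsumm : Summable (fun m : ℕ => ((m : ℝ) + 1) ^ (Nc + 1) * q ^ m) :=
    summable_aux _ hq0 hq1
  set Sreal : ℝ := ∑' m : ℕ, ((m : ℝ) + 1) ^ (Nc + 1) * q ^ m with hSdef
  refine ⟨lam * Sreal, fun n hn => ?_⟩
  set z : Fin d → ℤ := (n : ℤ) • x with hzdef
  have hzne : z ≠ 0 := by
    intro h
    rcases smul_eq_zero.mp h with h' | h'
    · have : n = 0 := by exact_mod_cast h'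
      omega
    · exact hx h'
  have hdz : dotR t (ic z) = nrm (ic z) := by
    rw [hzdef, ic_smul, dotR_smul, hnrm.smul, ht.1,
      abs_of_nonneg (by push_cast; positivity)]
  set F : (Fin d → ℤ) → ℝ≥0∞ := fun s => if s = 0 then 0 else
    ENNReal.ofReal (lam * (ψ s * Real.exp (-(scharge nrm t s)))) with hFdef
  have hFeq : ∀ s, F s = if s = 0 then 0 else
      ENNReal.ofReal (lam * (ψ s * Real.exp (-(scharge nrm t s)))) := fun s => rfl
  have hQ : (∑' y : Fin d → ℤ, F y) = ENNReal.ofReal q := by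
    have hsupp : Function.support F ⊆ {y : Fin d → ℤ | y ≠ 0} := by
      intro y hy
      exact fun h0 => hy (by rw [hFeq, if_pos h0])
    rw [← tsum_subtype_eq_of_support_subset hsupp]
    have h2 : ∀ y : {y : Fin d → ℤ // y ≠ 0}, F y.1 =
        ENNReal.ofReal (lam * (ψ y.1 * Real.exp (-(scharge nrm t y.1)))) :=
      fun y => by rw [hFeq, if_neg y.2]
    calc (∑' y : {y : Fin d → ℤ // y ≠ 0}, F y.1)
        = ∑' y : {y : Fin d → ℤ // y ≠ 0},
            ENNReal.ofReal (lam * (ψ y.1 * Real.exp (-(scharge nrm t y.1)))) :=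
          tsum_congr h2
      _ = ENNReal.ofReal q := by
          rw [← ENNReal.ofReal_tsum_of_nonneg
            (fun y => by have := hψpos y.1 y.2; positivity)
            ((hXi.mul_left lam).summable)]
          congr 1
          rw [hqdef]
          exact (hXi.mul_left lam).tsum_eq
  set G : List (Fin d → ℤ) × ℕ → ℝ≥0∞ := fun p => if p.2 ≤ p.1.length then
    ((p.1.length + 1 : ℕ) : ℝ≥0∞) ^ Nc * (p.1.map F).prod else 0 with hGdef
  set Cn : ℝ≥0∞ := ENNReal.ofReal (lam * (ψ z * Real.exp (-(nrm (ic z))))) with hCndef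
  -- the walk subtype
  have hsub : ∀ l : {l : List (Fin d → ℤ) // (∀ s ∈ l, s ≠ 0) ∧ l.sum = z - 0},
      l.1.sum = z := fun l => by have := l.2.2; exact this.trans (sub_zero z)
  have hlpos : ∀ l : {l : List (Fin d → ℤ) // (∀ s ∈ l, s ≠ 0) ∧ l.sum = z - 0},
      0 < l.1.length := by
    intro l
    rw [List.length_pos_iff]
    intro hnil
    have := hsub l
    rw [hnil, List.sum_nil] at this
    exact hzne this.symm
  set jd : {l : List (Fin d → ℤ) // (∀ s ∈ l, s ≠ 0) ∧ l.sum = z - 0} → ℕ :=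
    fun l => (exists_max_idx nrm l.1 (hlpos l)).choose with hjddef
  have hjd : ∀ l : {l : List (Fin d → ℤ) // (∀ s ∈ l, s ≠ 0) ∧ l.sum = z - 0}, jd l < l.1.length :=
    fun l => (exists_max_idx nrm l.1 (hlpos l)).choose_spec.choose
  have hjmax : ∀ l : {l : List (Fin d → ℤ) // (∀ s ∈ l, s ≠ 0) ∧ l.sum = z - 0}, ∀ i (hi : i < l.1.length),
      nrm (ic (l.1.get ⟨i, hi⟩)) ≤ nrm (ic (l.1.get ⟨jd l, hjd l⟩)) :=
    fun l => (exists_max_idx nrm l.1 (hlpos l)).choose_spec.choose_spec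
  have hval : ∀ l : {l : List (Fin d → ℤ) // (∀ s ∈ l, s ≠ 0) ∧ l.sum = z - 0}, l.1.get ⟨jd l, hjd l⟩ = z - (l.1.eraseIdx (jd l)).sum := by
    intro l
    have hperm := (perm_get_eraseIdx l.1 (jd l) (hjd l)).sum_eq
    rw [hsub l, List.sum_cons] at hperm
    exact eq_sub_of_add_eq hperm.symm
  have hinj : Function.Injective
      (fun l : {l : List (Fin d → ℤ) // (∀ s ∈ l, s ≠ 0) ∧ l.sum = z - 0} =>
        (l.1.eraseIdx (jd l), jd l)) := by
    intro l1 l2 heq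
    have hj2 : jd l1 = jd l2 := congrArg Prod.snd heq
    have he : l1.1.eraseIdx (jd l1) = l2.1.eraseIdx (jd l2) := congrArg Prod.fst heq
    have hv : l1.1.get ⟨jd l1, hjd l1⟩ = l2.1.get ⟨jd l2, hjd l2⟩ := by
      rw [hval l1, hval l2, he]
    have h2' : jd l1 < l2.1.length := by rw [hj2]; exact hjd l2
    have he' : l1.1.eraseIdx (jd l1) = l2.1.eraseIdx (jd l1) := by rw [he, hj2]
    have hfin : (⟨jd l1, h2'⟩ : Fin l2.1.length) = ⟨jd l2, hjd l2⟩ := by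
      apply Fin.ext
      exact hj2
    have hv' : l1.1.get ⟨jd l1, hjd l1⟩ = l2.1.get ⟨jd l1, h2'⟩ := by
      rw [hv, hfin]
    exact Subtype.ext (eq_of_eraseIdx (jd l1) l1.1 l2.1 (hjd l1) h2' he' hv')
  have hstep : ∀ l : {l : List (Fin d → ℤ) // (∀ s ∈ l, s ≠ 0) ∧ l.sum = z - 0},
      (l.1.map (fun s => ENNReal.ofReal (lam * Jw nrm ψ s))).prod ≤
        Cn * G (l.1.eraseIdx (jd l), jd l) := by
    intro l
    have hcond : jd l ≤ (l.1.eraseIdx (jd l)).length := by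
      have h1 := hjd l
      have h2 := List.length_eraseIdx_add_one (hjd l)
      omega
    have hGval : G (l.1.eraseIdx (jd l), jd l) =
        (((l.1.eraseIdx (jd l)).length + 1 : ℕ) : ℝ≥0∞) ^ Nc *
          ((l.1.eraseIdx (jd l)).map F).prod := by
      rw [hGdef]
      exact if_pos hcond
    rw [hGval, hCndef]
    exact walk_bound hnrm hψpos hαp hCα hψdef hlam0 hdual hzne hdz hNcge F hFeq
      l.1 l.2.1 (hsub l) (jd l) (hjd l) (hjmax l)
  have hKRW : KRW lam (Jw nrm ψ) 0 z =
      ∑' l : {l : List (Fin d → ℤ) // (∀ s ∈ l, s ≠ 0) ∧ l.sum = z - 0},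
        (l.1.map (fun s => ENNReal.ofReal (lam * Jw nrm ψ s))).prod := rfl
  rw [hKRW]
  have hchain1 : (∑' l : {l : List (Fin d → ℤ) // (∀ s ∈ l, s ≠ 0) ∧ l.sum = z - 0},
        (l.1.map (fun s => ENNReal.ofReal (lam * Jw nrm ψ s))).prod)
      ≤ Cn * ∑' p : List (Fin d → ℤ) × ℕ, G p := by
    refine le_trans (ENNReal.tsum_le_tsum hstep) ?_
    rw [ENNReal.tsum_mul_left]
    exact mul_le_mul_right (tsum_comp_le_tsum_of_injective hinj G) _
  have hser : (∑' p : List (Fin d → ℤ) × ℕ, G p) = ENNReal.ofReal Sreal := by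
    rw [hGdef, tsum_G F Nc, hQ, hSdef,
      ENNReal.ofReal_tsum_of_nonneg (fun m => by positivity) hsumm]
    apply tsum_congr
    intro m
    have hcast : ((m : ℝ) + 1) = ((m + 1 : ℕ) : ℝ) := by push_cast; ring
    rw [hcast]
    conv_rhs => rw [ENNReal.ofReal_mul (by positivity), ENNReal.ofReal_pow (by positivity),
      ENNReal.ofReal_pow hq0.le, ENNReal.ofReal_natCast]
  have hfin : Cn * ENNReal.ofReal Sreal ≤
      ENNReal.ofReal (lam * Sreal * Jw nrm ψ z) := by
    rw [hCndef, ← ENNReal.ofReal_mul (by have := hψpos z hzne; positivity)]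
    apply ENNReal.ofReal_le_ofReal
    apply le_of_eq
    rw [Jw, if_neg hzne]
    ring
  exact le_trans hchain1 (by rw [hser]; exact hfin)
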